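/- Consider the single-qubit state injection channel: given ancilla state (u, v) with |u|² + |v|² = 1, the channel G(σ) = A₁σA₁† + A₂σA₂† with A₁ = diag(u,v), A₂ = diag(v e^{iπ/4}, u e^{−iπ/4}), and the target channel E(σ) = T σ T† with T = diag(e^{iπ/8}, e^{−iπ/8}). Then for any 2×2 matrix σ with ‖σ‖₁ ≤ 1, ‖E(σ) − G(σ)‖₁ ≤ 2‖T − √2·Ā‖ + 2‖Δ‖², where Ā = (A₁ + A₂)/2 and Δ = (A₁ − A₂)/2. -/

import Mathlib

open scoped Matrix.Norms.L2Operator ComplexOrder Kronecker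
open Matrix Complex

/-- The trace norm (sum of singular values) of a square complex matrix. -/
noncomputable def traceNorm {n : Type*} [Fintype n] [DecidableEq n] (A : Matrix n n ℂ) : ℝ :=
  (((Matrix.posSemidef_conjTranspose_mul_self A).1.eigenvectorUnitary : Matrix n n ℂ) *
    Matrix.diagonal ((fun x : ℝ => (x : ℂ)) ∘ (√·) ∘ (Matrix.posSemidef_conjTranspose_mul_self A).1.eigenvalues) *
    (star (Matrix.posSemidef_conjTranspose_mul_self A).1.eigenvectorUnitary : Matrix n n ℂ)).trace.re


/-!
Split `G(σ) = A₁σA₁ᴴ + A₂σA₂ᴴ` by the parallelogram law into `BσBᴴ + 2ΔσΔᴴ` with `B = √2 Ā`.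
Then `TσTᴴ - BσBᴴ = Tσ(T - B)ᴴ + (T - B)σBᴴ`, and the bound follows from the Hölder-type
inequality `‖XσY‖₁ ≤ ‖X‖ ‖σ‖₁ ‖Y‖` together with `‖T‖ ≤ 1` and `‖B‖ ≤ 1`, the latter because
`(|u| + |v|)² ≤ 2(|u|² + |v|²) = 2`. The trace-norm inequalities come from the duality
`‖M‖₁ = max {Re tr(CM) : ‖C‖ ≤ 1}`, read off a singular value decomposition of `M`.
-/

namespace Matrix

lemma norm_apply_le_l2_opNorm {m n 𝕜 : Type*} [RCLike 𝕜] [Fintype m] [Fintype n]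
    [DecidableEq n] (X : Matrix m n 𝕜) (i : m) (j : n) : ‖X i j‖ ≤ ‖X‖ := by
  have h := X.l2_opNorm_mulVec (PiLp.single 2 j 1)
  rw [PiLp.norm_single, norm_one, mul_one] at h
  refine le_trans (le_of_eq ?_) ((PiLp.norm_apply_le _ i).trans h)
  simp

end Matrix

section TraceNorm

variable {n : Type*} [Fintype n] [DecidableEq n]

lemma traceNorm_eq_sum_sqrt_eigenvalues (M : Matrix n n ℂ) :
    traceNorm M = ∑ i, √((posSemidef_conjTranspose_mul_self M).1.eigenvalues i) := by
  rw [traceNorm, trace_mul_cycle, Matrix.UnitaryGroup.star_mul_self, one_mul, trace_diagonal]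
  simp

lemma exists_traceNorm_factorization (M : Matrix n n ℂ) :
    ∃ (U : unitary (Matrix n n ℂ)) (W : Matrix n n ℂ) (r : n → ℝ), ‖W‖ ≤ 1 ∧ 0 ≤ r ∧
      M = W * diagonal (fun i => (r i : ℂ)) * star (U : Matrix n n ℂ) ∧
      Wᴴ * W * diagonal (fun i => (r i : ℂ)) = diagonal (fun i => (r i : ℂ)) ∧
      traceNorm M = ∑ i, r i := by
  set hH := (posSemidef_conjTranspose_mul_self M).1
  set U := hH.eigenvectorUnitary
  set r : n → ℝ := fun i => √(hH.eigenvalues i)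
  set D : Matrix n n ℂ := diagonal (fun i => (r i : ℂ))
  set G : Matrix n n ℂ := diagonal (fun i => ((r i)⁻¹ : ℝ))
  set N : Matrix n n ℂ := M * U
  -- `G` is the pseudo-inverse of `D` (as `0⁻¹ = 0`), which makes `W = N * G` a partial isometry
  -- with `N = W * D`.
  have hNN : Nᴴ * N = D * D := by
    have h := hH.conjStarAlgAut_star_eigenvectorUnitary
    rw [Unitary.conjStarAlgAut_apply, Unitary.coe_star, star_star] at h
    rw [conjTranspose_mul, ← star_eq_conjTranspose, mul_assoc, ← mul_assoc Mᴴ, ← mul_assoc, h,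
      diagonal_mul_diagonal]
    congr 1
    funext i
    simp [r, ← ofReal_mul,
      Real.mul_self_sqrt ((posSemidef_conjTranspose_mul_self M).eigenvalues_nonneg i)]
  have hG : Gᴴ = G := by simp [G, diagonal_conjTranspose]
  have hWW : (N * G)ᴴ * (N * G) = diagonal (fun i => (((r i * (r i)⁻¹) ^ 2 : ℝ) : ℂ)) := by
    rw [conjTranspose_mul, hG, mul_assoc, ← mul_assoc Nᴴ, hNN]
    simp only [G, D, diagonal_mul_diagonal]
    congr 1; funext i; push_cast; ring
  have hD : D * (1 - G * D) = 0 := by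
    simp only [D, G, mul_sub, mul_one, diagonal_mul_diagonal, sub_eq_zero]
    congr 1; funext i; push_cast
    rcases eq_or_ne (r i : ℂ) 0 with h | h <;> field_simp [h]
  have hN : N = N * G * D := by
    rw [mul_assoc, ← sub_eq_zero, ← mul_one_sub, ← conjTranspose_mul_self_eq_zero,
      conjTranspose_mul, mul_assoc, ← mul_assoc Nᴴ, hNN, mul_assoc, hD, mul_zero, mul_zero]
  refine ⟨U, N * G, r, ?_, fun i => Real.sqrt_nonneg _, ?_, ?_, ?_⟩
  · have h : ‖N * G‖ * ‖N * G‖ ≤ 1 * 1 := by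
      rw [← l2_opNorm_conjTranspose_mul_self, hWW, l2_opNorm_diagonal, one_mul]
      refine (pi_norm_le_iff_of_nonneg zero_le_one).2 fun i => ?_
      rcases eq_or_ne (r i) 0 with h | h <;> simp [h]
    exact (mul_self_le_mul_self_iff (norm_nonneg _) zero_le_one).2 h
  · rw [← hN, mul_assoc, Unitary.mul_star_self_of_mem U.2, mul_one]
  · rw [hWW, diagonal_mul_diagonal]
    congr 1; funext i; push_cast
    rcases eq_or_ne (r i : ℂ) 0 with h | h <;> field_simp [h]
  · exact traceNorm_eq_sum_sqrt_eigenvalues M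

lemma re_trace_mul_le_opNorm_mul_traceNorm (C M : Matrix n n ℂ) :
    (C * M).trace.re ≤ ‖C‖ * traceNorm M := by
  obtain ⟨U, W, r, hW, hr, rfl, -, htn⟩ := exists_traceNorm_factorization M
  have hX : ‖star (U : Matrix n n ℂ) * C * W‖ ≤ ‖C‖ := by
    rw [mul_assoc, ← Unitary.coe_star, CStarRing.norm_coe_unitary_mul]
    exact (norm_mul_le _ _).trans (mul_le_of_le_one_right (norm_nonneg _) hW)
  rw [htn, Finset.mul_sum, ← mul_assoc, ← mul_assoc, trace_mul_cycle, ← mul_assoc, trace,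
    re_sum]
  refine Finset.sum_le_sum fun i _ => ?_
  rw [diag_apply, mul_diagonal, re_mul_ofReal]
  exact mul_le_mul_of_nonneg_right
    ((re_le_norm _).trans ((norm_apply_le_l2_opNorm _ i i).trans hX)) (hr i)

lemma exists_opNorm_le_one_re_trace_mul_eq_traceNorm (M : Matrix n n ℂ) :
    ∃ C : Matrix n n ℂ, ‖C‖ ≤ 1 ∧ (C * M).trace.re = traceNorm M := by
  obtain ⟨U, W, r, hW, -, rfl, hWW, htn⟩ := exists_traceNorm_factorization M
  refine ⟨U * Wᴴ, by rwa [CStarRing.norm_coe_unitary_mul, l2_opNorm_conjTranspose], ?_⟩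
  rw [htn, ← mul_assoc, ← mul_assoc, trace_mul_cycle, ← mul_assoc, ← mul_assoc (star _),
    Unitary.star_mul_self_of_mem U.2, one_mul, hWW, trace_diagonal, re_sum]
  simp

lemma traceNorm_nonneg (M : Matrix n n ℂ) : 0 ≤ traceNorm M := by
  obtain ⟨-, -, r, -, hr, -, -, htn⟩ := exists_traceNorm_factorization M
  exact htn ▸ Finset.sum_nonneg fun i _ => hr i

lemma re_trace_mul_le_traceNorm {C : Matrix n n ℂ} (hC : ‖C‖ ≤ 1) (M : Matrix n n ℂ) :
    (C * M).trace.re ≤ traceNorm M :=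
  (re_trace_mul_le_opNorm_mul_traceNorm C M).trans
    (mul_le_of_le_one_left (traceNorm_nonneg M) hC)

lemma traceNorm_le_of_forall_re_trace_mul_le {M : Matrix n n ℂ} {b : ℝ}
    (h : ∀ C : Matrix n n ℂ, ‖C‖ ≤ 1 → (C * M).trace.re ≤ b) : traceNorm M ≤ b := by
  obtain ⟨C, hC, hCM⟩ := exists_opNorm_le_one_re_trace_mul_eq_traceNorm M
  exact hCM ▸ h C hC

lemma traceNorm_add_le (A B : Matrix n n ℂ) : traceNorm (A + B) ≤ traceNorm A + traceNorm B :=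
  traceNorm_le_of_forall_re_trace_mul_le fun C hC => by
    rw [mul_add, trace_add, add_re]
    exact add_le_add (re_trace_mul_le_traceNorm hC A) (re_trace_mul_le_traceNorm hC B)

lemma traceNorm_sub_le (A B : Matrix n n ℂ) : traceNorm (A - B) ≤ traceNorm A + traceNorm B :=
  traceNorm_le_of_forall_re_trace_mul_le fun C hC => by
    rw [mul_sub, sub_eq_add_neg, ← neg_mul, trace_add, add_re]
    exact add_le_add (re_trace_mul_le_traceNorm hC A)
      (re_trace_mul_le_traceNorm ((norm_neg C).trans_le hC) B)

lemma traceNorm_mul_mul_le (X M Y : Matrix n n ℂ) :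
    traceNorm (X * M * Y) ≤ ‖X‖ * traceNorm M * ‖Y‖ :=
  traceNorm_le_of_forall_re_trace_mul_le fun C hC => by
    rw [← mul_assoc, ← mul_assoc, trace_mul_comm, ← mul_assoc, ← mul_assoc]
    calc _ ≤ ‖Y * C * X‖ * traceNorm M := re_trace_mul_le_opNorm_mul_traceNorm _ M
      _ ≤ ‖Y‖ * 1 * ‖X‖ * traceNorm M := by
        have := traceNorm_nonneg M
        gcongr
        exact (norm_mul₃_le ..).trans (by gcongr)
      _ = ‖X‖ * traceNorm M * ‖Y‖ := by ring

lemma traceNorm_conj_sub_conj_le {T B : Matrix n n ℂ} (hT : ‖T‖ ≤ 1) (hB : ‖B‖ ≤ 1)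
    (σ : Matrix n n ℂ) :
    traceNorm (T * σ * Tᴴ - B * σ * Bᴴ) ≤ 2 * ‖T - B‖ * traceNorm σ := by
  have h : T * σ * Tᴴ - B * σ * Bᴴ = T * σ * (T - B)ᴴ + (T - B) * σ * Bᴴ := by
    simp only [conjTranspose_sub, mul_sub, sub_mul]; abel
  have := traceNorm_nonneg σ
  calc _ ≤ ‖T‖ * traceNorm σ * ‖(T - B)ᴴ‖ + ‖T - B‖ * traceNorm σ * ‖Bᴴ‖ := by
        rw [h]
        exact (traceNorm_add_le _ _).trans
          (add_le_add (traceNorm_mul_mul_le _ _ _) (traceNorm_mul_mul_le _ _ _))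
    _ ≤ 1 * traceNorm σ * ‖T - B‖ + ‖T - B‖ * traceNorm σ * 1 := by
        rw [l2_opNorm_conjTranspose, l2_opNorm_conjTranspose]; gcongr
    _ = 2 * ‖T - B‖ * traceNorm σ := by ring

lemma mul_mul_star_parallelogram {R : Type*} [Ring R] [StarRing R] (a d x : R) :
    (a + d) * x * star (a + d) + (a - d) * x * star (a - d) =
      2 • (a * x * star a) + 2 • (d * x * star d) := by
  simp only [star_add, star_sub]; noncomm_ring

lemma traceNorm_conj_sub_sum_conj_le {T Ā : Matrix n n ℂ} (hT : ‖T‖ ≤ 1)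
    (hĀ : ‖(√2 : ℂ) • Ā‖ ≤ 1) (Δ σ : Matrix n n ℂ) :
    traceNorm (T * σ * Tᴴ - ((Ā + Δ) * σ * (Ā + Δ)ᴴ + (Ā - Δ) * σ * (Ā - Δ)ᴴ)) ≤
      (2 * ‖T - (√2 : ℂ) • Ā‖ + 2 * ‖Δ‖ ^ 2) * traceNorm σ := by
  set B := (√2 : ℂ) • Ā
  have hB : B * σ * Bᴴ = 2 • (Ā * σ * Āᴴ) := by
    have h2 : (√2 : ℂ) * (√2 : ℂ) = 2 := by
      rw [← ofReal_mul, Real.mul_self_sqrt zero_le_two]; simp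
    simp only [B, conjTranspose_smul, star_def, conj_ofReal, smul_mul_assoc, mul_smul_comm,
      smul_smul, h2, ofNat_smul_eq_nsmul]
  have h : T * σ * Tᴴ - ((Ā + Δ) * σ * (Ā + Δ)ᴴ + (Ā - Δ) * σ * (Ā - Δ)ᴴ) =
      (T * σ * Tᴴ - B * σ * Bᴴ) - ((2 : ℂ) • Δ) * σ * Δᴴ := by
    simp only [← star_eq_conjTranspose] at hB ⊢
    rw [mul_mul_star_parallelogram, hB, smul_mul_assoc, smul_mul_assoc]; module
  calc _ ≤ 2 * ‖T - B‖ * traceNorm σ + ‖(2 : ℂ) • Δ‖ * traceNorm σ * ‖Δᴴ‖ := by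
        rw [h]
        exact (traceNorm_sub_le _ _).trans
          (add_le_add (traceNorm_conj_sub_conj_le hT hĀ σ) (traceNorm_mul_mul_le _ _ _))
    _ = _ := by rw [l2_opNorm_conjTranspose, norm_smul, Complex.norm_two]; ring

end TraceNorm

lemma norm_add_mul_le_sqrt_two {u v ω : ℂ} (huv : ‖u‖ ^ 2 + ‖v‖ ^ 2 = 1) (hω : ‖ω‖ = 1) :
    ‖u + v * ω‖ ≤ √2 := by
  refine (norm_add_le _ _).trans ?_
  rw [norm_mul, hω, mul_one]
  exact Real.le_sqrt_of_sq_le (by nlinarith [sq_nonneg (‖u‖ - ‖v‖)])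

theorem stmt_18 (u v : ℂ) (huv : ‖u‖ ^ 2 + ‖v‖ ^ 2 = 1)
    (A₁ A₂ T Abar Δ : Matrix (Fin 2) (Fin 2) ℂ)
    (hA₁ : A₁ = Matrix.diagonal ![u, v])
    (hA₂ : A₂ = Matrix.diagonal
      ![v * Complex.exp (Complex.I * (Real.pi / 4)),
        u * Complex.exp (-(Complex.I * (Real.pi / 4)))])
    (hT : T = Matrix.diagonal
      ![Complex.exp (Complex.I * (Real.pi / 8)), Complex.exp (-(Complex.I * (Real.pi / 8)))])
    (hAbar : Abar = (1 / 2 : ℂ) • (A₁ + A₂))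
    (hΔ : Δ = (1 / 2 : ℂ) • (A₁ - A₂))
    (σ : Matrix (Fin 2) (Fin 2) ℂ) (hσ : traceNorm σ ≤ 1) :
    traceNorm (T * σ * Tᴴ - (A₁ * σ * A₁ᴴ + A₂ * σ * A₂ᴴ)) ≤
      2 * ‖T - (Real.sqrt 2 : ℂ) • Abar‖ + 2 * ‖Δ‖ ^ 2 := by
  have hT₁ : ‖T‖ ≤ 1 := by
    rw [hT, l2_opNorm_diagonal, pi_norm_le_iff_of_nonneg zero_le_one, Fin.forall_fin_two]
    simp [norm_exp]
  have hAbar₁ : ‖(√2 : ℂ) • Abar‖ ≤ 1 := by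
    have hsum : ‖A₁ + A₂‖ ≤ √2 := by
      rw [hA₁, hA₂, diagonal_add, l2_opNorm_diagonal,
        pi_norm_le_iff_of_nonneg (Real.sqrt_nonneg 2), Fin.forall_fin_two]
      simp only [cons_val_zero, cons_val_one]
      constructor
      · exact norm_add_mul_le_sqrt_two huv (by simp [norm_exp])
      · exact norm_add_mul_le_sqrt_two (by linarith) (by simp [norm_exp])
    rw [hAbar, norm_smul, norm_smul, norm_real, Real.norm_of_nonneg (Real.sqrt_nonneg 2),
      norm_div, norm_one, Complex.norm_two]
    calc √2 * (1 / 2 * ‖A₁ + A₂‖) ≤ √2 * (1 / 2 * √2) := by gcongr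
      _ = 1 := by rw [mul_left_comm, Real.mul_self_sqrt zero_le_two]; norm_num
  have hsplit : A₁ = Abar + Δ ∧ A₂ = Abar - Δ := by
    constructor <;> (rw [hAbar, hΔ]; module)
  rw [hsplit.1, hsplit.2]
  calc _ ≤ (2 * ‖T - (√2 : ℂ) • Abar‖ + 2 * ‖Δ‖ ^ 2) * traceNorm σ :=
        traceNorm_conj_sub_sum_conj_le hT₁ hAbar₁ Δ σ
    _ ≤ 2 * ‖T - (√2 : ℂ) • Abar‖ + 2 * ‖Δ‖ ^ 2 := mul_le_of_le_one_right (by positivity) hσ
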